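/- Let ν ∈ ℝⁿ \ {0}, θ ∈ (0, 1/2), and V ∈ L^∞(ℝ × ℝⁿ) with Σ_{α∈ℕ₀²} 2^{|α|/2} ‖V‖_{L^∞(Π_α^ν)} < ∞. Then the multiplication operator M_V : u ↦ Vu is bounded from Y_ν^{1/2−θ} to X_ν^θ with operator norm at most |ν|^{−1/2} Σ_{α∈ℕ₀²} 2^{|α|/2} ‖V‖_{L^∞(Π_α^ν)}. -/

import Mathlib

/-!
Hölder's inequality on each strip gives `‖V u‖_{L²(Π_α)} ≤ ‖V‖_{L^∞(Π_α)} ‖u‖_{L²(Π_α)}`.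
Splitting the weight as `2^{|α|θ} = 2^{|α|/2} · 2^{−|α|(1/2−θ)}`, the first factor stays with `V`
and is summed over `α`, while the second goes with `u` and is bounded by the supremum defining
the `Y`-norm. The powers of `|ν|` match because `−1/4 = −1/2 + 1/4`.
-/

open MeasureTheory Complex ComplexConjugate
open scoped RealInnerProductSpace ENNReal

noncomputable section

/-- Dyadic time intervals `Υ₀ = {|t| ≤ 1}`, `Υ_j = {2^{j−1} < |t| ≤ 2^j}`. -/
def Ups : ℕ → Set ℝ
  | 0 => {t : ℝ | |t| ≤ 1}
  | (j + 1) => {t : ℝ | (2 : ℝ) ^ j < |t| ∧ |t| ≤ (2 : ℝ) ^ (j + 1)}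

/-- Dyadic slabs `Ω_j^ν` in the direction `ν`. -/
def Om {n : ℕ} (ν : EuclideanSpace ℝ (Fin n)) : ℕ → Set (EuclideanSpace ℝ (Fin n))
  | 0 => {x | |(⟪x, ν⟫ : ℝ)| ≤ ‖ν‖}
  | (j + 1) => {x | (2 : ℝ) ^ j * ‖ν‖ < |(⟪x, ν⟫ : ℝ)| ∧ |(⟪x, ν⟫ : ℝ)| ≤ (2 : ℝ) ^ (j + 1) * ‖ν‖}

/-- The strips `Π_α^ν = Υ_{α₁} × Ω_{α₂}^ν`. -/
def strip {n : ℕ} (ν : EuclideanSpace ℝ (Fin n)) (α : ℕ × ℕ) :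
    Set (ℝ × EuclideanSpace ℝ (Fin n)) :=
  Ups α.1 ×ˢ Om ν α.2

/-- The norm of the space `Y_ν^θ`:
`‖u‖ = |ν|^{1/4} sup_α 2^{−|α|θ} ‖u‖_{L²(Π_α^ν)}` (valued in `ℝ≥0∞`). -/
def Ynorm {n : ℕ} (ν : EuclideanSpace ℝ (Fin n)) (θ : ℝ)
    (u : ℝ × EuclideanSpace ℝ (Fin n) → ℂ) : ℝ≥0∞ :=
  ENNReal.ofReal (‖ν‖ ^ ((1 : ℝ) / 4)) *
    ⨆ α : ℕ × ℕ, ENNReal.ofReal ((2 : ℝ) ^ (-((α.1 + α.2 : ℕ) : ℝ) * θ)) *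
      eLpNorm u 2 (volume.restrict (strip ν α))

/-- The norm of the space `X_ν^θ`:
`‖f‖ = |ν|^{−1/4} Σ_α 2^{|α|θ} ‖f‖_{L²(Π_α^ν)}` (valued in `ℝ≥0∞`). -/
def Xnorm {n : ℕ} (ν : EuclideanSpace ℝ (Fin n)) (θ : ℝ)
    (f : ℝ × EuclideanSpace ℝ (Fin n) → ℂ) : ℝ≥0∞ :=
  ENNReal.ofReal (‖ν‖ ^ (-(1 : ℝ) / 4)) *
    ∑' α : ℕ × ℕ, ENNReal.ofReal ((2 : ℝ) ^ (((α.1 + α.2 : ℕ) : ℝ) * θ)) *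
      eLpNorm f 2 (volume.restrict (strip ν α))

theorem ENNReal.tsum_mul_le_tsum_mul_iSup {ι : Type*} (f g : ι → ℝ≥0∞) :
    ∑' i, f i * g i ≤ (∑' i, f i) * ⨆ i, g i := by
  rw [← ENNReal.tsum_mul_right]
  exact ENNReal.tsum_le_tsum fun i => by gcongr; exact le_iSup g i

theorem tsum_mul_eLpNorm_mul_restrict_le {α ι 𝕜 : Type*} [MeasurableSpace α] [NormedRing 𝕜]
    (μ : Measure α) (s : ι → Set α) (p : ℝ≥0∞) (a b : ι → ℝ≥0∞) (V u : α → 𝕜)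
    (hu : AEStronglyMeasurable u μ) :
    ∑' i, a i * b i * eLpNorm (fun x => V x * u x) p (μ.restrict (s i))
      ≤ (∑' i, a i * eLpNorm V ∞ (μ.restrict (s i))) *
          ⨆ i, b i * eLpNorm u p (μ.restrict (s i)) := by
  refine le_trans (ENNReal.tsum_le_tsum fun i => ?_) (ENNReal.tsum_mul_le_tsum_mul_iSup _ _)
  calc a i * b i * eLpNorm (fun x => V x * u x) p (μ.restrict (s i))
      ≤ a i * b i * (eLpNorm V ∞ (μ.restrict (s i)) * eLpNorm u p (μ.restrict (s i))) := by
        gcongr; exact eLpNorm_smul_le_eLpNorm_top_mul_eLpNorm p hu.restrict V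
    _ = a i * eLpNorm V ∞ (μ.restrict (s i)) * (b i * eLpNorm u p (μ.restrict (s i))) := by
        ring

theorem stmt9_general (n : ℕ) (ν : EuclideanSpace ℝ (Fin n)) (θ : ℝ)
    (V : ℝ × EuclideanSpace ℝ (Fin n) → ℂ) :
    ∀ u : ℝ × EuclideanSpace ℝ (Fin n) → ℂ,
      AEStronglyMeasurable u (volume : Measure (ℝ × EuclideanSpace ℝ (Fin n))) →
      Xnorm ν θ (fun p => V p * u p)
        ≤ ENNReal.ofReal (‖ν‖ ^ (-(1 : ℝ) / 2)) *
            (∑' α : ℕ × ℕ, ENNReal.ofReal ((2 : ℝ) ^ (((α.1 + α.2 : ℕ) : ℝ) / 2)) *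
              eLpNorm V ⊤ (volume.restrict (strip ν α))) *
            Ynorm ν (1 / 2 - θ) u := by
  intro u hu
  have hweight (k : ℝ) : ENNReal.ofReal ((2 : ℝ) ^ (k * θ))
      = ENNReal.ofReal ((2 : ℝ) ^ (k / 2)) * ENNReal.ofReal ((2 : ℝ) ^ (-k * (1 / 2 - θ))) := by
    rw [← ENNReal.ofReal_mul (by positivity), ← Real.rpow_add two_pos]
    ring_nf
  have hscale : ENNReal.ofReal (‖ν‖ ^ (-(1 : ℝ) / 4))
      = ENNReal.ofReal (‖ν‖ ^ (-(1 : ℝ) / 2)) * ENNReal.ofReal (‖ν‖ ^ ((1 : ℝ) / 4)) := by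
    rw [← ENNReal.ofReal_mul (by positivity), ← Real.rpow_add' (norm_nonneg _) (by norm_num)]
    norm_num
  rw [Xnorm, hscale, Ynorm]
  simp only [hweight]
  calc _ ≤ ENNReal.ofReal (‖ν‖ ^ (-(1 : ℝ) / 2)) * ENNReal.ofReal (‖ν‖ ^ ((1 : ℝ) / 4)) *
        ((∑' α : ℕ × ℕ, ENNReal.ofReal ((2 : ℝ) ^ (((α.1 + α.2 : ℕ) : ℝ) / 2)) *
            eLpNorm V ⊤ (volume.restrict (strip ν α))) *
          ⨆ α : ℕ × ℕ, ENNReal.ofReal ((2 : ℝ) ^ (-((α.1 + α.2 : ℕ) : ℝ) * (1 / 2 - θ))) *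
            eLpNorm u 2 (volume.restrict (strip ν α))) := by
        gcongr
        exact tsum_mul_eLpNorm_mul_restrict_le _ _ _ _ _ V u hu
    _ = _ := by ring

/-- the multiplication operator `M_V : u ↦ V u` maps `Y_ν^{1/2−θ}` boundedly
into `X_ν^θ` with operator norm at most `|ν|^{−1/2} Σ_α 2^{|α|/2} ‖V‖_{L^∞(Π_α^ν)}`. -/
theorem stmt9 (n : ℕ) (ν : EuclideanSpace ℝ (Fin n)) (hν : ν ≠ 0)
    (θ : ℝ) (hθ : θ ∈ Set.Ioo (0 : ℝ) (1 / 2))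
    (V : ℝ × EuclideanSpace ℝ (Fin n) → ℂ)
    (hV : MemLp V ⊤ (volume : Measure (ℝ × EuclideanSpace ℝ (Fin n))))
    (hVsum : (∑' α : ℕ × ℕ, ENNReal.ofReal ((2 : ℝ) ^ (((α.1 + α.2 : ℕ) : ℝ) / 2)) *
        eLpNorm V ⊤ (volume.restrict (strip ν α))) ≠ ⊤) :
    ∀ u : ℝ × EuclideanSpace ℝ (Fin n) → ℂ,
      AEStronglyMeasurable u (volume : Measure (ℝ × EuclideanSpace ℝ (Fin n))) →
      Xnorm ν θ (fun p => V p * u p)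
        ≤ ENNReal.ofReal (‖ν‖ ^ (-(1 : ℝ) / 2)) *
            (∑' α : ℕ × ℕ, ENNReal.ofReal ((2 : ℝ) ^ (((α.1 + α.2 : ℕ) : ℝ) / 2)) *
              eLpNorm V ⊤ (volume.restrict (strip ν α))) *
            Ynorm ν (1 / 2 - θ) u :=
  stmt9_general n ν θ V

end
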